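/- arXiv:1511.09467 — 6 statements merged into one kernel-verified Lean document; each statement's English description precedes it below -/
import Mathlib

section
/- Let X = GC(G, S, α) be a generalized Cayley graph on a finite abelian group G of odd order. Then there exist finite abelian groups G₁ and G₂ of odd order (namely G₁ = Fix(α) and G₂ = ω_α(G)) and a subset S̄ ⊆ (G₁ \ {1}) × G₂ with the property that (s₁, s₂) ∈ S̄ if and only if (s₁⁻¹, s₂) ∈ S̄, such that X is isomorphic to the simple graph Y on vertex set G₁ × G₂ whose edges are exactly the pairs {(g₁, g₂), (g₁·s₁, g₂⁻¹·s₂)} for (g₁, g₂) ∈ G₁ × G₂ and (s₁, s₂) ∈ S̄. -/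
/-- The generalized Cayley graph `GC(G, S, α)`. -/
def GC {G : Type*} [Group G] (α : G ≃* G) (S : Set G)
    (h1 : ∀ x : G, α (α x) = x)
    (h2 : ∀ x : G, α x⁻¹ * x ∉ S)
    (h3 : ⇑α '' S⁻¹ = S) : SimpleGraph G where
  Adj x y := α x⁻¹ * y ∈ S
  symm := ⟨by
    intro x y hxy
    have hmem : (α x⁻¹ * y)⁻¹ ∈ S⁻¹ := by simpa [Set.mem_inv] using hxy
    have himg : α ((α x⁻¹ * y)⁻¹) ∈ ⇑α '' S⁻¹ := Set.mem_image_of_mem _ hmem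
    rw [h3] at himg
    simpa [mul_inv_rev, map_mul, map_inv, h1] using himg⟩
  loopless := ⟨fun x hx => h2 x hx⟩

/-- `Fix(α)`, the subgroup of elements fixed by `α`. -/
def fixSubgroup {G : Type*} [Group G] (α : G ≃* G) : Subgroup G where
  carrier := {g : G | α g = g}
  one_mem' := by simp
  mul_mem' := by
    intro a b ha hb
    simp only [Set.mem_setOf_eq] at *
    rw [map_mul, ha, hb]
  inv_mem' := by
    intro a ha
    simp only [Set.mem_setOf_eq] at *
    rw [map_inv, ha]

/-- `ω_α(G) = {α(g)·g⁻¹ : g ∈ G}`, a subgroup when `G` is abelian. -/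
def omegaSubgroup {G : Type*} [CommGroup G] (α : G ≃* G) : Subgroup G where
  carrier := Set.range fun g : G => α g * g⁻¹
  one_mem' := ⟨1, by simp⟩
  mul_mem' := by
    rintro _ _ ⟨a, rfl⟩ ⟨b, rfl⟩
    exact ⟨a * b, by simp only [map_mul, mul_inv_rev]; ac_rfl⟩
  inv_mem' := by
    rintro _ ⟨a, rfl⟩
    exact ⟨a⁻¹, by simp only [map_inv, mul_inv_rev, inv_inv]; exact mul_comm _ _⟩

/-!
Since `α` is an involution of the abelian group `G`, every `α h · h` is fixed by `α` and every
`(α h)⁻¹ · h` is inverted by it; as squaring is bijective in odd order, `g = h²` factors uniquely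
as such a product, so multiplication `Fix(α) × ω_α(G) → G` is a group isomorphism. On a
product `f · w` the map `x ↦ α(x⁻¹)` acts as `(f, w) ↦ (f⁻¹, w)`, so transporting
`GC(G, S, α)` along this isomorphism gives the graph on `Fix(α) × ω_α(G)` with connection set
the preimage of `S`.
-/

theorem Subgroup.odd_natCard_of_odd {G : Type*} [Group G] (H : Subgroup G)
    (hodd : Odd (Nat.card G)) : Odd (Nat.card H) :=
  hodd.of_dvd_nat H.card_subgroup_dvd_card

theorem apply_inv_mem_iff_of_image_inv_eq {G : Type*} [Group G] {α : G ≃* G} {S : Set G}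
    (h3 : ⇑α '' S⁻¹ = S) {x : G} : α x⁻¹ ∈ S ↔ x ∈ S := by
  conv_lhs => rw [← h3]
  rw [α.injective.mem_set_image, Set.inv_mem_inv]

section Decomposition

variable {G : Type*} [CommGroup G] {α : G ≃* G}

theorem apply_coe_fixSubgroup (f : fixSubgroup α) : α f = f := f.2

theorem apply_coe_omegaSubgroup (h1 : ∀ x : G, α (α x) = x) (w : omegaSubgroup α) :
    α w = (w : G)⁻¹ := by
  obtain ⟨_, g, rfl⟩ := w
  simp only [map_mul, map_inv, h1, mul_inv_rev, inv_inv]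

theorem apply_mul_self_mem_fixSubgroup (h1 : ∀ x : G, α (α x) = x) (x : G) :
    α x * x ∈ fixSubgroup α := by
  change α (α x * x) = α x * x
  rw [map_mul, h1, mul_comm]

theorem inv_apply_mul_mem_omegaSubgroup (x : G) : (α x)⁻¹ * x ∈ omegaSubgroup α :=
  ⟨x⁻¹, by simp only [map_inv, inv_inv]⟩

variable (α) in
def fixOmegaMul : fixSubgroup α × omegaSubgroup α →* G :=
  (fixSubgroup α).subtype.coprod (omegaSubgroup α).subtype

theorem fixOmegaMul_apply (p : fixSubgroup α × omegaSubgroup α) :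
    fixOmegaMul α p = (p.1 : G) * p.2 := rfl

/-- Injectivity: applying `α` to `f · w = 1` gives `f · w⁻¹ = 1`, hence `f² = w² = 1`. -/
theorem bijective_fixOmegaMul (h1 : ∀ x : G, α (α x) = x)
    (hsq : Function.Bijective fun g : G => g ^ 2) : Function.Bijective (fixOmegaMul α) := by
  refine ⟨(injective_iff_map_eq_one _).2 fun ⟨f, w⟩ hfw => ?_, fun g => ?_⟩
  · have hfw : (f : G) * w = 1 := hfw
    have hfw' : (f : G) * (w : G)⁻¹ = 1 := by
      rw [← apply_coe_fixSubgroup f, ← apply_coe_omegaSubgroup h1 w, ← map_mul, hfw, map_one]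
    have hf : (f : G) ^ 2 = 1 ^ 2 := by
      rw [show (f : G) ^ 2 = (f * w) * (f * (w : G)⁻¹) by simp [sq, mul_left_comm, mul_assoc],
        hfw, hfw', one_pow, one_mul]
    have hw : (w : G) ^ 2 = 1 ^ 2 := by
      rw [show (w : G) ^ 2 = (f * w) * (f * (w : G)⁻¹)⁻¹ by simp [sq, mul_left_comm, mul_assoc],
        hfw, hfw', one_pow, inv_one, one_mul]
    exact Prod.ext (Subtype.ext (hsq.1 hf)) (Subtype.ext (hsq.1 hw))
  · obtain ⟨h, rfl⟩ := hsq.2 g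
    refine ⟨(⟨α h * h, apply_mul_self_mem_fixSubgroup h1 h⟩,
      ⟨(α h)⁻¹ * h, inv_apply_mul_mem_omegaSubgroup h⟩), ?_⟩
    simp only [fixOmegaMul_apply]
    rw [mul_mul_mul_comm, mul_inv_cancel, one_mul, sq]

theorem apply_inv_fixOmegaMul (h1 : ∀ x : G, α (α x) = x) (p : fixSubgroup α × omegaSubgroup α) :
    α (fixOmegaMul α p)⁻¹ = fixOmegaMul α (p.1⁻¹, p.2) := by
  rw [fixOmegaMul_apply, fixOmegaMul_apply, map_inv, map_mul, apply_coe_fixSubgroup,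
    apply_coe_omegaSubgroup h1, mul_inv_rev, inv_inv, mul_comm]
  rfl

end Decomposition

section QuotientGraph

variable {G : Type*} [CommGroup G] {α : G ≃* G} {S : Set G}

theorem fst_ne_one_of_mem_preimage_fixOmegaMul (h2 : ∀ x : G, α x⁻¹ * x ∉ S)
    {s : fixSubgroup α × omegaSubgroup α} (hs : s ∈ fixOmegaMul α ⁻¹' S) : s.1 ≠ 1 := by
  obtain ⟨f, _, g, rfl⟩ := s
  rintro (rfl : f = 1)
  apply h2 g⁻¹
  simpa [fixOmegaMul_apply] using hs

theorem inv_fst_mem_preimage_fixOmegaMul_iff (h1 : ∀ x : G, α (α x) = x) (h3 : ⇑α '' S⁻¹ = S)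
    (s₁ : fixSubgroup α) (s₂ : omegaSubgroup α) :
    (s₁, s₂) ∈ fixOmegaMul α ⁻¹' S ↔ (s₁⁻¹, s₂) ∈ fixOmegaMul α ⁻¹' S := by
  rw [Set.mem_preimage, Set.mem_preimage, ← apply_inv_fixOmegaMul h1 (s₁, s₂),
    apply_inv_mem_iff_of_image_inv_eq h3]

theorem comap_fixOmegaMul_GC_adj (h1 : ∀ x : G, α (α x) = x) (h2 : ∀ x : G, α x⁻¹ * x ∉ S)
    (h3 : ⇑α '' S⁻¹ = S) (a b : fixSubgroup α × omegaSubgroup α) :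
    ((GC α S h1 h2 h3).comap (fixOmegaMul α)).Adj a b ↔
      ∃ s ∈ fixOmegaMul α ⁻¹' S, b = (a.1 * s.1, a.2⁻¹ * s.2) := by
  change α (fixOmegaMul α a)⁻¹ * fixOmegaMul α b ∈ S ↔ _
  rw [apply_inv_fixOmegaMul h1, ← map_mul]
  constructor
  · intro hb
    exact ⟨_, hb, Prod.ext (mul_inv_cancel_left _ _).symm (inv_mul_cancel_left _ _).symm⟩
  · rintro ⟨s, hs, rfl⟩
    simpa using hs

end QuotientGraph

/-- every generalized Cayley graph on a finite abelian group `G` of odd order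
is isomorphic to the graph `Y` on `G₁ × G₂` (`G₁ = Fix(α)`, `G₂ = ω_α(G)`, both finite
abelian of odd order) whose edges are exactly the pairs `{(g₁,g₂), (g₁s₁, g₂⁻¹s₂)}` for
`(s₁,s₂)` in a set `S̄ ⊆ (G₁ \ {1}) × G₂` with `(s₁,s₂) ∈ S̄ ↔ (s₁⁻¹,s₂) ∈ S̄`. -/
theorem stmt_6 {G : Type*} [CommGroup G] [Fintype G] (hodd : Odd (Fintype.card G))
    (α : G ≃* G) (S : Set G)
    (h1 : ∀ x : G, α (α x) = x)
    (h2 : ∀ x : G, α x⁻¹ * x ∉ S)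
    (h3 : ⇑α '' S⁻¹ = S) :
    Odd (Nat.card (fixSubgroup α)) ∧ Odd (Nat.card (omegaSubgroup α)) ∧
    ∃ Sb : Set (fixSubgroup α × omegaSubgroup α),
      (∀ s ∈ Sb, s.1 ≠ 1) ∧
      (∀ s₁ s₂, (s₁, s₂) ∈ Sb ↔ (s₁⁻¹, s₂) ∈ Sb) ∧
      ∃ Y : SimpleGraph (fixSubgroup α × omegaSubgroup α),
        (∀ a b, Y.Adj a b ↔ ∃ s ∈ Sb, b = (a.1 * s.1, a.2⁻¹ * s.2)) ∧
        Nonempty (GC α S h1 h2 h3 ≃g Y) := by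
  rw [← Nat.card_eq_fintype_card] at hodd
  have hψ := bijective_fixOmegaMul h1 (Nat.coprime_two_right.2 hodd).pow_left_bijective
  exact ⟨(fixSubgroup α).odd_natCard_of_odd hodd, (omegaSubgroup α).odd_natCard_of_odd hodd,
    fixOmegaMul α ⁻¹' S, fun _ => fst_ne_one_of_mem_preimage_fixOmegaMul h2,
    inv_fst_mem_preimage_fixOmegaMul_iff h1 h3, _, comap_fixOmegaMul_GC_adj h1 h2 h3,
    ⟨(SimpleGraph.Iso.comap (Equiv.ofBijective _ hψ) _).symm⟩⟩
end

section
/- Let G be a finite abelian group whose Sylow 2-subgroup is cyclic of order 2ⁿ, let α be an automorphism of G with α² = 1, let H be the (unique) subgroup of G of index 2ⁿ (so H has odd order), and set H₁ = Fix(α) ∩ H and H₂ = ω_α(G) ∩ H. Then there exist a group isomorphism φ : G ≅ ℤ/2ⁿℤ × H₁ × H₂ and an element a ∈ {1, −1, 2ⁿ⁻¹+1, 2ⁿ⁻¹−1} (mod 2ⁿ) such that for all (x, y₁, y₂) ∈ ℤ/2ⁿℤ × H₁ × H₂ one has (φ ∘ α ∘ φ⁻¹)(x, y₁, y₂) = (a·x,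 y₁, y₂⁻¹). -/
lemma aux_sq_one (n : ℕ) (k : ℤ) (hk : (2:ℤ)^n ∣ k^2 - 1) :
    (k : ZMod (2^n)) = 1 ∨ (k : ZMod (2^n)) = -1 ∨
    (k : ZMod (2^n)) = 2 ^ (n-1) + 1 ∨ (k : ZMod (2^n)) = 2 ^ (n-1) - 1 := by
  rcases Nat.eq_zero_or_pos n with hn | hn
  · subst hn
    left
    exact Subsingleton.elim (α := ZMod 1) _ _
  have h2 : (2:ℤ) ∣ k^2 - 1 := dvd_trans (dvd_pow_self 2 hn.ne') hk
  have hkodd : k % 2 = 1 := by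
    rcases Int.even_or_odd k with ⟨t, ht⟩ | ⟨t, ht⟩
    · exfalso
      obtain ⟨c, hc⟩ := h2
      have h4t : k^2 = 4*(t*t) := by rw [ht]; ring
      omega
    · omega
  have hfac : k^2 - 1 = (k - 1) * (k + 1) := by ring
  have hpow : (2:ℤ)^n = 2 * 2^(n-1) := by
    rw [← pow_succ']; congr 1; omega
  have key : (2:ℤ)^(n-1) ∣ k - 1 ∨ (2:ℤ)^(n-1) ∣ k + 1 := by
    have h4 : k % 4 = 1 ∨ k % 4 = 3 := by omega
    have copr : ∀ w : ℤ, ¬ (2:ℤ) ∣ w → IsCoprime ((2:ℤ)^(n-1)) w := by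
      intro w hw
      exact (IsCoprime.pow_left ((Int.prime_two.coprime_iff_not_dvd).mpr hw))
    rcases h4 with h4 | h4
    · left
      set w := (k + 1) / 2 with hw
      have hw2 : k + 1 = 2 * w := by omega
      have hwodd : ¬ (2:ℤ) ∣ w := by omega
      have hdvd : (2:ℤ)^(n-1) ∣ (k - 1) * w := by
        have h := hk
        rw [hfac, hw2, hpow] at h
        have h' : (2:ℤ) * 2^(n-1) ∣ 2 * ((k-1) * w) := by
          convert h using 1; ring
        exact (mul_dvd_mul_iff_left (by norm_num : (2:ℤ) ≠ 0)).mp h'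
      exact (copr w hwodd).dvd_of_dvd_mul_right hdvd
    · right
      set w := (k - 1) / 2 with hw
      have hw2 : k - 1 = 2 * w := by omega
      have hwodd : ¬ (2:ℤ) ∣ w := by omega
      have hdvd : (2:ℤ)^(n-1) ∣ (k + 1) * w := by
        have h := hk
        rw [hfac, hw2, hpow] at h
        have h' : (2:ℤ) * 2^(n-1) ∣ 2 * ((k+1) * w) := by
          convert h using 1; ring
        exact (mul_dvd_mul_iff_left (by norm_num : (2:ℤ) ≠ 0)).mp h'
      exact (copr w hwodd).dvd_of_dvd_mul_right hdvd
  have hzero : (2 : ZMod (2^n))^n = 0 := by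
    have := ZMod.natCast_self (2^n)
    push_cast at this
    exact this
  rcases key with ⟨t, ht⟩ | ⟨t, ht⟩
  · rcases Int.even_or_odd t with ⟨s, hs⟩ | ⟨s, hs⟩
    · left
      have hk1 : k = 1 + 2^n * s := by
        rw [hpow]; linear_combination ht + 2^(n-1) * hs
      rw [hk1]; push_cast; rw [hzero]; ring
    · right; right; left
      have hk1 : k = 1 + 2^(n-1) + 2^n * s := by
        rw [hpow]; linear_combination ht + 2^(n-1) * hs
      rw [hk1]; push_cast; rw [hzero]; ring
  · rcases Int.even_or_odd t with ⟨s, hs⟩ | ⟨s, hs⟩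
    · right; left
      have hk1 : k = -1 + 2^n * s := by
        rw [hpow]; linear_combination ht + 2^(n-1) * hs
      rw [hk1]; push_cast; rw [hzero]; ring
    · right; right; right
      have hk1 : k = -1 + 2^(n-1) + 2^n * s := by
        rw [hpow]; linear_combination ht + 2^(n-1) * hs
      rw [hk1]; push_cast; rw [hzero]; ring

set_option linter.unusedVariables false

theorem aux_part2 {G : Type*} [CommGroup G] [Fintype G] (n : ℕ)
    (α : G ≃* G) (h1 : ∀ x : G, α (α x) = x)
    (H : Subgroup G) (hH : H.index = 2 ^ n)
    (e : Multiplicative (ZMod (2 ^ n)) →* G)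
    (g : G) (horder : orderOf g = 2 ^ n)
    (hg1 : g ^ ((2:ℕ) ^ n) = 1)
    (hP2 : ∀ x : G, x ^ ((2:ℕ) ^ n) = 1 → x ∈ Subgroup.zpowers g)
    (he_int : ∀ j : ℤ, e (Multiplicative.ofAdd ((j : ZMod (2 ^ n)))) = g ^ j)
    (he_inj : ∀ x : Multiplicative (ZMod (2 ^ n)), e x = 1 → x = 1)
    (k : ℤ)
    (hae : ∀ x : Multiplicative (ZMod (2 ^ n)),
      α (e x) = e (Multiplicative.ofAdd ((k : ZMod (2 ^ n)) * Multiplicative.toAdd x)))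
    (hmodd : Odd (Nat.card H))
    (hcop : Nat.Coprime (2 ^ n) (Nat.card H))
    (u v : ℤ) (huv : (2:ℤ) ^ n * u + ((Nat.card H : ℕ):ℤ) * v = 1)
    (hGcard : Nat.card H * 2 ^ n = Nat.card G)
    (hpowH : ∀ x : G, x ^ ((2:ℕ) ^ n) ∈ H)
    (helem : ∀ x : G, x ∈ H → x ^ (Nat.card H) = 1)
    (hαH : ∀ x : G, x ∈ H → α x ∈ H) :
    ∃ (φ : G ≃* Multiplicative (ZMod (2 ^ n)) ×
        (fixSubgroup α ⊓ H : Subgroup G) × (omegaSubgroup α ⊓ H : Subgroup G)),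
      ∀ (x : Multiplicative (ZMod (2 ^ n))) (y₁ : (fixSubgroup α ⊓ H : Subgroup G))
        (y₂ : (omegaSubgroup α ⊓ H : Subgroup G)),
        φ (α (φ.symm (x, y₁, y₂))) =
          (Multiplicative.ofAdd ((k : ZMod (2 ^ n)) * Multiplicative.toAdd x), y₁, y₂⁻¹) := by
  classical
  set m := Nat.card H with hm
  have homega : ∀ y : G, y ∈ omegaSubgroup α → α y = y⁻¹ := by
    intro y hy
    obtain ⟨t, rfl⟩ : ∃ t, α t * t⁻¹ = y := hy
    rw [map_mul, map_inv, h1, mul_inv_rev, inv_inv]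
  set Ψ : Multiplicative (ZMod (2 ^ n)) ×
      (fixSubgroup α ⊓ H : Subgroup G) × (omegaSubgroup α ⊓ H : Subgroup G) →* G :=
    MonoidHom.mk' (fun p => e p.1 * (p.2.1 : G) * (p.2.2 : G)) (by
      intro p q
      simp only [Prod.fst_mul, Prod.snd_mul, map_mul, Subgroup.coe_mul]
      ac_rfl) with hΨdef
  have hΨapp : ∀ p, Ψ p = e p.1 * (p.2.1 : G) * (p.2.2 : G) := fun p => rfl
  have hex2 : ∀ x : Multiplicative (ZMod (2 ^ n)), (e x) ^ ((2:ℕ) ^ n) = 1 := by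
    intro x
    obtain ⟨j, hj⟩ := ZMod.intCast_surjective (Multiplicative.toAdd x)
    have hxe : x = Multiplicative.ofAdd ((j : ZMod (2 ^ n))) := by rw [hj]; rfl
    rw [hxe, he_int, ← zpow_natCast, ← zpow_mul, mul_comm, zpow_mul, zpow_natCast, hg1,
      one_zpow]
  have hinj : Function.Injective Ψ := by
    rw [injective_iff_map_eq_one]
    rintro ⟨x, y₁, y₂⟩ hp
    have hp' : e x * (y₁ : G) * (y₂ : G) = 1 := hp
    have hy1H : (y₁ : G) ∈ H := (Subgroup.mem_inf.mp y₁.2).2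
    have hy2H : (y₂ : G) ∈ H := (Subgroup.mem_inf.mp y₂.2).2
    have hy1f : α (y₁ : G) = (y₁ : G) := (Subgroup.mem_inf.mp y₁.2).1
    have hy2ω : (y₂ : G) ∈ omegaSubgroup α := (Subgroup.mem_inf.mp y₂.2).1
    have hq : e x = ((y₁ : G) * (y₂ : G))⁻¹ := by
      rw [mul_assoc] at hp'
      exact eq_inv_of_mul_eq_one_left hp'
    have hxm : (e x) ^ m = 1 := by
      rw [hq, inv_pow, helem _ (mul_mem hy1H hy2H), inv_one]
    have hex1 : e x = 1 := by
      have d1 := orderOf_dvd_of_pow_eq_one (hex2 x)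
      have d2 := orderOf_dvd_of_pow_eq_one hxm
      have hd := Nat.dvd_gcd d1 d2
      rw [Nat.Coprime] at hcop
      rw [hcop] at hd
      exact orderOf_eq_one_iff.mp (Nat.dvd_one.mp hd)
    have hx1 : x = 1 := he_inj x hex1
    have hy12 : (y₁ : G) * (y₂ : G) = 1 := by
      rw [hex1] at hq
      rw [← inv_inv ((y₁ : G) * (y₂ : G)), ← hq, inv_one]
    have hc2 : ((y₁ : G)) ^ (2:ℕ) = 1 := by
      have hyinv : (y₁ : G) = ((y₂ : G))⁻¹ := eq_inv_of_mul_eq_one_left hy12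
      have hαc : α (y₁ : G) = (y₁ : G)⁻¹ := by
        rw [hyinv, map_inv, homega _ hy2ω, inv_inv]
      have hcc : (y₁ : G) = (y₁ : G)⁻¹ := hy1f.symm.trans hαc
      rw [pow_two]
      nth_rewrite 2 [hcc]
      exact mul_inv_cancel _
    have hc1 : (y₁ : G) = 1 := by
      have d1 := orderOf_dvd_of_pow_eq_one hc2
      have d2 := orderOf_dvd_of_pow_eq_one (helem _ hy1H)
      have hd := Nat.dvd_gcd d1 d2
      have hcop2 : Nat.gcd 2 m = 1 := Nat.coprime_two_left.mpr hmodd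
      rw [hcop2] at hd
      exact orderOf_eq_one_iff.mp (Nat.dvd_one.mp hd)
    have hy1 : y₁ = 1 := Subtype.ext hc1
    have hy2 : y₂ = 1 := by
      apply Subtype.ext
      have h' := hy12
      rw [hc1, one_mul] at h'
      simpa using h'
    rw [hx1, hy1, hy2]
    rfl
  have hsurj : Function.Surjective Ψ := by
    intro z
    have hzsplit : z = (z ^ ((2:ℤ) ^ n)) ^ u * (z ^ (m:ℤ)) ^ v := by
      rw [← zpow_mul, ← zpow_mul, ← zpow_add, huv, zpow_one]
    have hnat2 : z ^ ((2:ℤ) ^ n) = z ^ ((2:ℕ) ^ n) := by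
      rw [← zpow_natCast]; push_cast; ring_nf
    set hpart := (z ^ ((2:ℤ) ^ n)) ^ u with hhp
    set ppart := (z ^ (m:ℤ)) ^ v with hpp
    have hhH : hpart ∈ H := by
      rw [hhp, hnat2]
      exact Subgroup.zpow_mem H (hpowH z) u
    have hp2 : ppart ^ ((2:ℕ) ^ n) = 1 := by
      have h2' : ppart ^ ((2:ℕ) ^ n) = (z ^ ((m * 2 ^ n : ℕ):ℤ)) ^ v := by
        rw [hpp, ← zpow_natCast ((z ^ (m:ℤ)) ^ v), ← zpow_mul, ← zpow_mul, ← zpow_mul]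
        congr 1
        push_cast
        ring
      have h3' : z ^ (m * 2 ^ n : ℕ) = 1 := by rw [hGcard]; exact pow_card_eq_one'
      rw [h2', zpow_natCast, h3', one_zpow]
    obtain ⟨w, hw⟩ := Subgroup.mem_zpowers_iff.mp (hP2 ppart hp2)
    have hex : e (Multiplicative.ofAdd ((w : ZMod (2 ^ n)))) = ppart := by rw [he_int]; exact hw
    obtain ⟨s, hs⟩ : ∃ s : ℕ, 2 * s = m + 1 := ⟨(m + 1) / 2, by obtain ⟨t, ht⟩ := hmodd; omega⟩
    have hαh : α hpart ∈ H := hαH hpart hhH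
    have h1mem : (hpart * α hpart) ^ s ∈ fixSubgroup α ⊓ H := by
      rw [Subgroup.mem_inf]
      constructor
      · show α ((hpart * α hpart) ^ s) = (hpart * α hpart) ^ s
        rw [map_pow, map_mul, h1, mul_comm]
      · exact pow_mem (mul_mem hhH hαh) s
    have h2mem : (hpart * (α hpart)⁻¹) ^ s ∈ omegaSubgroup α ⊓ H := by
      rw [Subgroup.mem_inf]
      constructor
      · refine pow_mem ?_ s
        refine ⟨hpart⁻¹, ?_⟩
        show α hpart⁻¹ * hpart⁻¹⁻¹ = hpart * (α hpart)⁻¹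
        rw [map_inv, inv_inv]
        exact mul_comm _ _
      · exact pow_mem (mul_mem hhH (inv_mem hαh)) s
    have hsplit2 : (hpart * α hpart) ^ s * (hpart * (α hpart)⁻¹) ^ s = hpart := by
      rw [← mul_pow]
      have hbase : (hpart * α hpart) * (hpart * (α hpart)⁻¹) = hpart ^ 2 := by
        rw [pow_two, mul_mul_mul_comm, mul_inv_cancel, mul_one]
      rw [hbase, ← pow_mul, hs, pow_succ, helem _ hhH, one_mul]
    refine ⟨(Multiplicative.ofAdd ((w : ZMod (2 ^ n))),
      ⟨(hpart * α hpart) ^ s, h1mem⟩, ⟨(hpart * (α hpart)⁻¹) ^ s, h2mem⟩), ?_⟩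
    rw [hΨapp]
    show e (Multiplicative.ofAdd ((w : ZMod (2 ^ n)))) * (hpart * α hpart) ^ s *
      (hpart * (α hpart)⁻¹) ^ s = z
    rw [hex, mul_assoc, hsplit2, mul_comm]
    exact hzsplit.symm
  have hbij : Function.Bijective Ψ := ⟨hinj, hsurj⟩
  refine ⟨(MulEquiv.ofBijective Ψ hbij).symm, ?_⟩
  intro x y₁ y₂
  rw [MulEquiv.symm_symm, MulEquiv.symm_apply_eq]
  show α (Ψ (x, y₁, y₂)) = Ψ (Multiplicative.ofAdd ((k : ZMod (2 ^ n)) * Multiplicative.toAdd x), y₁, y₂⁻¹)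
  rw [hΨapp, hΨapp]
  have hy1f : α (y₁ : G) = (y₁ : G) := (Subgroup.mem_inf.mp y₁.2).1
  have hy2ω : (y₂ : G) ∈ omegaSubgroup α := (Subgroup.mem_inf.mp y₂.2).1
  rw [map_mul, map_mul, hae, hy1f, homega _ hy2ω]
  simp

/-- If `G` is a finite abelian group whose Sylow `2`-subgroup is cyclic of
order `2ⁿ`, `α` is an automorphism of `G` with `α² = 1`, `H` is the subgroup of index `2ⁿ`,
`H₁ = Fix(α) ∩ H` and `H₂ = ω_α(G) ∩ H`, then `G ≅ ℤ/2ⁿℤ × H₁ × H₂` via some isomorphism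
`φ`, and there is `a ∈ {1, −1, 2ⁿ⁻¹+1, 2ⁿ⁻¹−1}` with
`(φ∘α∘φ⁻¹)(x, y₁, y₂) = (a·x, y₁, y₂⁻¹)`. -/
theorem stmt_7 {G : Type*} [CommGroup G] [Fintype G] (n : ℕ)
    (α : G ≃* G) (h1 : ∀ x : G, α (α x) = x)
    (P : Sylow 2 G) (hPcyc : IsCyclic P) (hPcard : Nat.card P = 2 ^ n)
    (H : Subgroup G) (hH : H.index = 2 ^ n) :
    ∃ (φ : G ≃* Multiplicative (ZMod (2 ^ n)) ×
        (fixSubgroup α ⊓ H : Subgroup G) × (omegaSubgroup α ⊓ H : Subgroup G))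
      (a : ZMod (2 ^ n)),
      (a = 1 ∨ a = -1 ∨ a = 2 ^ (n - 1) + 1 ∨ a = 2 ^ (n - 1) - 1) ∧
      ∀ (x : Multiplicative (ZMod (2 ^ n))) (y₁ : (fixSubgroup α ⊓ H : Subgroup G))
        (y₂ : (omegaSubgroup α ⊓ H : Subgroup G)),
        φ (α (φ.symm (x, y₁, y₂))) =
          (Multiplicative.ofAdd (a * Multiplicative.toAdd x), y₁, y₂⁻¹) := by
  haveI : Fact (Nat.Prime 2) := ⟨Nat.prime_two⟩
  classical
  have hGcard : Nat.card H * 2 ^ n = Nat.card G := by rw [← hH]; exact H.card_mul_index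
  have hmodd : Odd (Nat.card H) := by
    have hfact : (Nat.card G).factorization 2 = n := by
      have := P.card_eq_multiplicity
      rw [hPcard] at this
      exact Nat.pow_right_injective (le_refl 2) this.symm
    rw [Nat.odd_iff]
    by_contra hcon
    have h2 : 2 ∣ Nat.card H := by omega
    have hdvd : 2 ^ (n + 1) ∣ Nat.card G := by
      obtain ⟨c, hc⟩ := h2
      exact ⟨c, by rw [← hGcard, hc]; ring⟩
    rw [Nat.Prime.pow_dvd_iff_le_factorization Nat.prime_two Nat.card_pos.ne'] at hdvd
    omega
  have hcop : Nat.Coprime (2 ^ n) (Nat.card H) :=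
    Nat.Coprime.pow_left _ (Nat.coprime_two_left.mpr hmodd)
  obtain ⟨u, v, huv⟩ : ∃ u v : ℤ, (2:ℤ) ^ n * u + ((Nat.card H : ℕ):ℤ) * v = 1 := by
    obtain ⟨u, v, h⟩ := Nat.isCoprime_iff_coprime.mpr hcop
    exact ⟨u, v, by push_cast at h ⊢; linarith⟩
  have hpowH : ∀ x : G, x ^ ((2:ℕ) ^ n) ∈ H := fun x => hH ▸ H.pow_index_mem x
  have hHmem : ∀ x : G, x ^ (Nat.card H) = 1 → x ∈ H := by
    intro x hx
    have hx1 : x = (x ^ ((2:ℤ) ^ n)) ^ u * (x ^ ((Nat.card H : ℕ):ℤ)) ^ v := by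
      rw [← zpow_mul, ← zpow_mul, ← zpow_add, huv, zpow_one]
    have hxm : x ^ ((Nat.card H : ℕ):ℤ) = 1 := by rw [zpow_natCast, hx]
    rw [hx1, hxm, one_zpow, mul_one]
    refine Subgroup.zpow_mem H ?_ u
    have : x ^ ((2:ℤ) ^ n) = x ^ ((2:ℕ) ^ n) := by
      rw [← zpow_natCast]; push_cast; ring_nf
    rw [this]; exact hpowH x
  have helem : ∀ x : G, x ∈ H → x ^ (Nat.card H) = 1 := by
    intro x hx
    have h' : (⟨x, hx⟩ : H) ^ (Nat.card H) = 1 := pow_card_eq_one'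
    have h'' := congrArg Subtype.val h'
    simp only [SubmonoidClass.coe_pow, OneMemClass.coe_one] at h''
    exact h''
  have hαH : ∀ x : G, x ∈ H → α x ∈ H := fun x hx =>
    hHmem _ (by rw [← map_pow, helem x hx, map_one])
  -- generator
  obtain ⟨g0, hgen⟩ := hPcyc.exists_generator
  set g : G := (g0 : G) with hgdef
  have horder : orderOf g = 2 ^ n := by
    rw [Subgroup.orderOf_coe, orderOf_eq_card_of_forall_mem_zpowers hgen, hPcard]
  have hg1 : g ^ ((2:ℕ) ^ n) = 1 := by rw [← horder]; exact pow_orderOf_eq_one g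
  have hP2 : ∀ x : G, x ^ ((2:ℕ) ^ n) = 1 → x ∈ Subgroup.zpowers g := by
    intro x hx
    have hpg : IsPGroup 2 (Subgroup.zpowers x) := by
      rintro ⟨y, j, rfl⟩
      refine ⟨n, ?_⟩
      ext
      push_cast
      rw [← zpow_natCast, ← zpow_mul, mul_comm, zpow_mul, zpow_natCast, hx, one_zpow]
    obtain ⟨Q, hQ⟩ := hpg.exists_le_sylow
    haveI := Sylow.unique_of_normal P (Subgroup.normal_of_comm _)
    have hQP : Q = P := Subsingleton.elim _ _
    have hxP : x ∈ (P : Subgroup G) := by rw [← hQP]; exact hQ (Subgroup.mem_zpowers x)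
    obtain ⟨j, hj⟩ := hgen ⟨x, hxP⟩
    exact ⟨j, congrArg Subtype.val hj⟩
  -- the embedding e
  have hgN : (zmultiplesHom (Additive G) (Additive.ofMul g)) ((2 ^ n : ℕ) : ℤ) = 0 := by
    simp only [zmultiplesHom_apply, ← ofMul_zpow, zpow_natCast, ← horder, pow_orderOf_eq_one]
    rfl
  set e : Multiplicative (ZMod (2 ^ n)) →* G :=
    AddMonoidHom.toMultiplicativeLeft
      (ZMod.lift (2 ^ n) ⟨zmultiplesHom (Additive G) (Additive.ofMul g), hgN⟩) with hedef
  have he_int : ∀ j : ℤ, e (Multiplicative.ofAdd ((j : ZMod (2 ^ n)))) = g ^ j := by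
    intro j
    show Additive.toMul ((ZMod.lift (2 ^ n) ⟨_, hgN⟩)
      (Multiplicative.toAdd (Multiplicative.ofAdd ((j : ZMod (2 ^ n)))))) = g ^ j
    rw [toAdd_ofAdd, ZMod.lift_coe]
    simp [zmultiplesHom_apply, toMul_zsmul]
  have he_inj : ∀ x : Multiplicative (ZMod (2 ^ n)), e x = 1 → x = 1 := by
    intro x hx
    obtain ⟨j, hj⟩ := ZMod.intCast_surjective (Multiplicative.toAdd x)
    have hxe : x = Multiplicative.ofAdd ((j : ZMod (2 ^ n))) := by rw [hj]; rfl
    rw [hxe, he_int] at hx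
    have hdvd : ((2 ^ n : ℕ) : ℤ) ∣ j := by
      rw [← horder]; exact orderOf_dvd_iff_zpow_eq_one.mpr hx
    have hj0 : ((j : ZMod (2 ^ n))) = 0 := (ZMod.intCast_zmod_eq_zero_iff_dvd _ _).mpr hdvd
    rw [hxe, hj0]; rfl
  -- α on the 2-part
  have hαg2 : (α g) ^ ((2:ℕ) ^ n) = 1 := by rw [← map_pow, hg1, map_one]
  obtain ⟨k, hk⟩ := Subgroup.mem_zpowers_iff.mp (hP2 (α g) hαg2)
  have hk2 : (2:ℤ) ^ n ∣ k ^ 2 - 1 := by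
    have hgk : g ^ (k * k) = g := by
      calc g ^ (k * k) = (g ^ k) ^ k := by rw [zpow_mul]
        _ = (α g) ^ k := by rw [hk]
        _ = α (g ^ k) := (map_zpow α g k).symm
        _ = α (α g) := by rw [hk]
        _ = g := h1 g
    have hgk1 : g ^ (k * k - 1) = 1 := by
      rw [zpow_sub, hgk, zpow_one, mul_inv_cancel]
    have hdvd := orderOf_dvd_iff_zpow_eq_one.mpr hgk1
    rw [horder] at hdvd
    have : k ^ 2 - 1 = k * k - 1 := by ring
    rw [this]
    exact_mod_cast hdvd
  have hae : ∀ x : Multiplicative (ZMod (2 ^ n)),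
      α (e x) = e (Multiplicative.ofAdd ((k : ZMod (2 ^ n)) * Multiplicative.toAdd x)) := by
    intro x
    obtain ⟨j, hj⟩ := ZMod.intCast_surjective (Multiplicative.toAdd x)
    have hxe : x = Multiplicative.ofAdd ((j : ZMod (2 ^ n))) := by rw [hj]; rfl
    rw [hxe, he_int, toAdd_ofAdd]
    have hmul : (k : ZMod (2 ^ n)) * (j : ZMod (2 ^ n)) = ((k * j : ℤ) : ZMod (2 ^ n)) := by
      push_cast; ring
    rw [hmul, he_int]
    calc α (g ^ j) = (α g) ^ j := map_zpow α g j
      _ = (g ^ k) ^ j := by rw [hk]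
      _ = g ^ (k * j) := by rw [← zpow_mul]
  obtain ⟨φ, hφ⟩ := aux_part2 n α h1 H hH e g horder hg1 hP2 he_int he_inj k hae
    hmodd hcop u v huv hGcard hpowH helem hαH
  exact ⟨φ, (k : ZMod (2 ^ n)), aux_sq_one n k hk2, hφ⟩
end

section
/- Let n be a positive integer, let H be a finite abelian group of odd order, let G = ℤ/2ⁿℤ × H, and let ι be the inversion automorphism ι(x) = x⁻¹ of G. Then for every subset S ⊆ G such that ι(x⁻¹)·x ∉ S for all x ∈ G and ι(S⁻¹) = S, the generalized Cayley graph GC(G, S, ι) is isomorphic to a Cayley graph on the generalized dihedral group Dih(ℤ/2ⁿ⁻¹ℤ × H); that is, there exists a subset T of Dih(ℤ/2ⁿ⁻¹ℤ × H) with 1 ∉ T and T⁻¹ = T such that GC(G, S, ι) is isomorphic to Cay(Dih(ℤ/2ⁿ⁻¹ℤ × H), T). -/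
/-- The Cayley graph `Cay(H, T)`. -/
def Cay {H : Type*} [Group H] (T : Set H) (hT1 : (1 : H) ∉ T) (hT2 : T⁻¹ = T) :
    SimpleGraph H where
  Adj x y := x⁻¹ * y ∈ T
  symm := ⟨by
    intro x y hxy
    have : (x⁻¹ * y)⁻¹ ∈ T⁻¹ := by simpa [Set.mem_inv] using hxy
    rw [hT2] at this
    simpa [mul_inv_rev] using this⟩
  loopless := ⟨fun x hx => hT1 (by simpa using hx)⟩

/-- The action of `ℤ/2ℤ` on an abelian group `A` in which the nontrivial element acts
by inversion. -/
def dihHom (A : Type*) [CommGroup A] : Multiplicative (ZMod 2) →* MulAut A :=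
  MonoidHom.mk'
    (fun i => if Multiplicative.toAdd i = 0 then 1 else MulEquiv.inv A)
    (by
      have hsq : (MulEquiv.inv A) * (MulEquiv.inv A) = 1 := by
        ext a; simp
      have hcases : ∀ x : ZMod 2, x = 0 ∨ x = 1 := by decide
      intro i j
      rcases hcases (Multiplicative.toAdd i) with hi | hi <;>
        rcases hcases (Multiplicative.toAdd j) with hj | hj <;>
        simp [toAdd_mul, hi, hj, hsq, (by decide : (1 + 1 : ZMod 2) = 0)])

/-- The generalized dihedral group `Dih(A) = A ⋊ ℤ/2ℤ`, the nontrivial element of `ℤ/2ℤ`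
acting on the abelian group `A` by inversion. -/
abbrev Dih (A : Type*) [CommGroup A] :=
  SemidirectProduct A (Multiplicative (ZMod 2)) (dihHom A)

/-! Since `ι` is inversion, `x` and `y` are adjacent in `GC(G, S, ι)` iff `x * y ∈ S`. As `|H|` is
odd, the squares of `G` form the index-two subgroup `E ≅ ℤ/2ⁿ⁻¹ × H` of elements with even first
coordinate, so `S` avoids `E`. Fix `c ∉ E`. Sending rotations `⟨a, 1⟩` to `a` and reflections
`⟨a, r⟩` to `c * a⁻¹` is a bijection `Dih(E) → G` which turns `d⁻¹ * d'` into the product of the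
images whenever exactly one of `d`, `d'` is a reflection, while both `x * y` and `d⁻¹ * d'` lie in
`E` otherwise. Hence it carries `Cay(Dih(E), T)`, for `T` the preimage of `S`, onto `GC(G, S, ι)`.
-/

theorem Multiplicative.zmod_two_eq_one_or (ε : Multiplicative (ZMod 2)) : ε = 1 ∨ ε = ofAdd 1 := by
  revert ε; decide

@[simp] theorem dihHom_one (A : Type*) [CommGroup A] : dihHom A 1 = 1 := rfl

@[simp] theorem dihHom_ofAdd_one (A : Type*) [CommGroup A] :
    dihHom A (.ofAdd 1) = MulEquiv.inv A := rfl

namespace Dih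

variable {A G : Type*} [CommGroup A] [CommGroup G]

theorem inv_eq_self_of_right_ne_one {d : Dih A} (h : d.right ≠ 1) : d⁻¹ = d := by
  obtain ⟨a, ε⟩ := d
  obtain rfl | rfl := ε.zmod_two_eq_one_or
  · exact absurd rfl h
  · ext <;> simp

def toIndexTwo (θ : A →* G) (c : G) (d : Dih A) : G :=
  if d.right = 1 then θ d.left else c * (θ d.left)⁻¹

variable {θ : A →* G} {c : G}

theorem toIndexTwo_mem_range_iff (hc : c ∉ θ.range) (d : Dih A) :
    toIndexTwo θ c d ∈ θ.range ↔ d.right = 1 := by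
  unfold toIndexTwo
  split_ifs with h
  · simp [h]
  · rw [θ.range.mul_mem_cancel_right (θ.range.inv_mem ⟨d.left, rfl⟩)]
    simp [h, hc]

theorem toIndexTwo_inv_mul {d d' : Dih A} (h : d.right ≠ d'.right) :
    toIndexTwo θ c (d⁻¹ * d') = toIndexTwo θ c d * toIndexTwo θ c d' := by
  obtain ⟨a, ε⟩ := d
  obtain ⟨b, ε'⟩ := d'
  obtain rfl | rfl := ε.zmod_two_eq_one_or <;> obtain rfl | rfl := ε'.zmod_two_eq_one_or
  all_goals first
    | exact absurd rfl h
    | simp [toIndexTwo, mul_comm, mul_left_comm]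

theorem toIndexTwo_bijective (hθ : Function.Injective θ) (hidx : θ.range.index = 2)
    (hc : c ∉ θ.range) : Function.Bijective (toIndexTwo θ c) := by
  refine ⟨fun d d' h => ?_, fun x => ?_⟩
  · have hright : d.right = d'.right := by
      have := toIndexTwo_mem_range_iff hc d
      rw [h, toIndexTwo_mem_range_iff hc] at this
      rcases d.right.zmod_two_eq_one_or with h1 | h1 <;>
        rcases d'.right.zmod_two_eq_one_or with h2 | h2 <;> simp_all
    have hleft : θ d.left = θ d'.left := by
      unfold toIndexTwo at h
      split_ifs at h with h1 h2 <;> simp_all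
    exact SemidirectProduct.ext (hθ hleft) hright
  · by_cases hx : x ∈ θ.range
    · obtain ⟨a, rfl⟩ := hx
      exact ⟨⟨a, 1⟩, by simp [toIndexTwo]⟩
    · have : c * x⁻¹ ∈ θ.range := by
        simp [Subgroup.mul_mem_iff_of_index_two hidx, hc, hx]
      obtain ⟨a, ha⟩ := this
      exact ⟨⟨a, .ofAdd 1⟩, by simp [toIndexTwo, ha]⟩

end Dih

open Dih in
theorem exists_GC_inv_iso_cay_dih {A G : Type*} [CommGroup A] [CommGroup G] (θ : A →* G)
    (hθ : Function.Injective θ) (hidx : θ.range.index = 2) (S : Set G)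
    (h1 : ∀ x : G, (MulEquiv.inv G) ((MulEquiv.inv G) x) = x)
    (h2 : ∀ x : G, (MulEquiv.inv G) x⁻¹ * x ∉ S) (h3 : ⇑(MulEquiv.inv G) '' S⁻¹ = S)
    (hS : ∀ s ∈ S, s ∉ θ.range) :
    ∃ (T : Set (Dih A)) (hT1 : (1 : Dih A) ∉ T) (hT2 : T⁻¹ = T),
      Nonempty (GC (MulEquiv.inv G) S h1 h2 h3 ≃g Cay T hT1 hT2) := by
  obtain ⟨c, hc⟩ : ∃ c, c ∉ θ.range := by
    by_contra! h
    rw [(eq_top_iff.2 fun x _ => h x : θ.range = ⊤), Subgroup.index_top] at hidx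
    exact absurd hidx (by decide)
  have hmem := toIndexTwo_mem_range_iff hc
  have hT : ∀ t ∈ toIndexTwo θ c ⁻¹' S, t.right ≠ 1 := fun t ht h => hS _ ht ((hmem t).2 h)
  have hT2 : (toIndexTwo θ c ⁻¹' S)⁻¹ = toIndexTwo θ c ⁻¹' S := by
    ext t
    refine ⟨fun ht => ?_, fun ht => ?_⟩
    · rwa [← inv_inv t, inv_eq_self_of_right_ne_one (hT _ ht)]
    · rwa [Set.mem_inv, inv_eq_self_of_right_ne_one (hT _ ht)]
  refine ⟨_, fun h => hT 1 h rfl, hT2, ⟨SimpleGraph.Iso.symm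
    { toEquiv := Equiv.ofBijective _ (toIndexTwo_bijective hθ hidx hc)
      map_rel_iff' := fun {d d'} => ?_ }⟩⟩
  change (MulEquiv.inv G) (toIndexTwo θ c d)⁻¹ * toIndexTwo θ c d' ∈ S ↔
    toIndexTwo θ c (d⁻¹ * d') ∈ S
  rw [MulEquiv.inv_apply, inv_inv]
  by_cases h : d.right = d'.right
  · refine iff_of_false (fun hs => hS _ hs ?_) (fun hs => hS _ hs ?_)
    · rw [Subgroup.mul_mem_iff_of_index_two hidx, hmem, hmem, h]
    · simp [hmem, h]
  · rw [toIndexTwo_inv_mul h]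

theorem exists_mul_self_eq_of_odd_card {H : Type*} [Group H] [Fintype H]
    (hodd : Odd (Fintype.card H)) (h : H) : ∃ y, y * y = h := by
  obtain ⟨m, hm⟩ := hodd
  refine ⟨h ^ (m + 1), ?_⟩
  rw [← pow_add, (by omega : m + 1 + (m + 1) = Fintype.card H + 1), pow_succ, pow_card_eq_one,
    one_mul]

namespace ZMod

variable {M N : ℕ}

def doubleHom (hN : N = 2 * M) : ZMod M →+ ZMod N :=
  ZMod.lift M ⟨(2 : ℤ) • Int.castAddHom (ZMod N), by
    subst hN
    simpa [two_mul] using ZMod.natCast_self (2 * M)⟩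

variable (hN : N = 2 * M)

theorem doubleHom_intCast (z : ℤ) : doubleHom hN z = 2 * z := by
  simp [doubleHom, ZMod.lift_coe]

theorem doubleHom_injective : Function.Injective (doubleHom hN) := by
  refine (injective_iff_map_eq_zero _).2 fun x hx => ?_
  obtain ⟨z, rfl⟩ := ZMod.intCast_surjective x
  rw [doubleHom_intCast, ← Int.cast_two, ← Int.cast_mul, ZMod.intCast_zmod_eq_zero_iff_dvd,
    hN, Nat.cast_mul, Nat.cast_two, mul_dvd_mul_iff_left two_ne_zero] at hx
  exact (ZMod.intCast_zmod_eq_zero_iff_dvd z M).2 hx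

theorem exists_add_self_eq_doubleHom (x : ZMod M) : ∃ y, y + y = doubleHom hN x := by
  obtain ⟨z, rfl⟩ := ZMod.intCast_surjective x
  exact ⟨z, by rw [doubleHom_intCast, two_mul]⟩

end ZMod

section DoubleFst

variable {M N : ℕ} (H : Type*) [CommGroup H] (hN : N = 2 * M)

def doubleFst : Multiplicative (ZMod M) × H →* Multiplicative (ZMod N) × H :=
  (AddMonoidHom.toMultiplicative (ZMod.doubleHom hN)).prodMap (MonoidHom.id H)

theorem doubleFst_injective : Function.Injective (doubleFst H hN) :=
  Function.Injective.prodMap (ZMod.doubleHom_injective hN) Function.injective_id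

theorem index_range_doubleFst [NeZero M] [Finite H] : (doubleFst H hN).range.index = 2 := by
  have hcard := (doubleFst H hN).range.index_mul_card
  rw [← Nat.card_congr (MonoidHom.ofInjective (doubleFst_injective H hN)).toEquiv] at hcard
  have hzmod (k : ℕ) : Nat.card (Multiplicative (ZMod k)) = k := Nat.card_zmod k
  rw [Nat.card_prod, Nat.card_prod, hzmod, hzmod] at hcard
  refine Nat.eq_of_mul_eq_mul_right (Nat.mul_pos (NeZero.pos M) (Nat.card_pos (α := H))) ?_
  rw [hcard, hN, mul_assoc]

theorem exists_mul_self_eq_doubleFst [Fintype H] (hodd : Odd (Fintype.card H))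
    (a : Multiplicative (ZMod M) × H) : ∃ y, y * y = doubleFst H hN a := by
  obtain ⟨u, hu⟩ := ZMod.exists_add_self_eq_doubleHom hN a.1.toAdd
  obtain ⟨h, hh⟩ := exists_mul_self_eq_of_odd_card hodd a.2
  exact ⟨(.ofAdd u, h), Prod.ext (congrArg Multiplicative.ofAdd hu) hh⟩

end DoubleFst

/-- For `n ≥ 1`, `H` a finite abelian group of odd order,
`G = ℤ/2ⁿℤ × H` and `ι` the inversion automorphism of `G`, every generalized Cayley graph
`GC(G, S, ι)` is isomorphic to a Cayley graph on `Dih(ℤ/2ⁿ⁻¹ℤ × H)`. -/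
theorem stmt_8 (n : ℕ) (hn : 0 < n) (H : Type*) [CommGroup H] [Fintype H]
    (hodd : Odd (Fintype.card H))
    (S : Set (Multiplicative (ZMod (2 ^ n)) × H))
    (h1 : ∀ x : Multiplicative (ZMod (2 ^ n)) × H,
      (MulEquiv.inv _) ((MulEquiv.inv _) x) = x)
    (h2 : ∀ x : Multiplicative (ZMod (2 ^ n)) × H, (MulEquiv.inv _) x⁻¹ * x ∉ S)
    (h3 : ⇑(MulEquiv.inv (Multiplicative (ZMod (2 ^ n)) × H)) '' S⁻¹ = S) :
    ∃ (T : Set (Dih (Multiplicative (ZMod (2 ^ (n - 1))) × H)))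
      (hT1 : (1 : Dih (Multiplicative (ZMod (2 ^ (n - 1))) × H)) ∉ T)
      (hT2 : T⁻¹ = T),
      Nonempty (GC (MulEquiv.inv (Multiplicative (ZMod (2 ^ n)) × H)) S h1 h2 h3 ≃g
        Cay T hT1 hT2) := by
  obtain ⟨m, rfl⟩ : ∃ m, n = m + 1 := ⟨n - 1, by omega⟩
  rw [Nat.add_sub_cancel]
  have hN : 2 ^ (m + 1) = 2 * 2 ^ m := pow_succ' 2 m
  refine exists_GC_inv_iso_cay_dih (doubleFst H hN) (doubleFst_injective H hN)
    (index_range_doubleFst H hN) S h1 h2 h3 fun s hs ⟨a, ha⟩ => ?_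
  obtain ⟨y, hy⟩ := exists_mul_self_eq_doubleFst H hN hodd a
  apply h2 y
  rwa [MulEquiv.inv_apply, inv_inv, hy, ha]
end

section
/- Let m ≥ 1 and n ≥ 2 be integers, let G = ℤ/2ᵐℤ × ℤ/2ⁿℤ (written additively), let S = {(1,0), (0,1), (1,1)}, and let ι be the inversion (negation) automorphism of G. Then the generalized Cayley graph GC(G, S, ι) is not vertex-transitive: it is not the case that for every pair of vertices u, v there is a graph automorphism of GC(G, S, ι) mapping u to v. -/
/-- The generalized Cayley graph `GC(G, S, α)` for an additively written group. -/
def GCadd {G : Type*} [AddGroup G] (α : G ≃+ G) (S : Set G)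
    (h1 : ∀ x : G, α (α x) = x)
    (h2 : ∀ x : G, α (-x) + x ∉ S)
    (h3 : ⇑α '' (-S) = S) : SimpleGraph G where
  Adj x y := α (-x) + y ∈ S
  symm := by
    refine ⟨?_⟩
    intro x y hxy
    have hmem : -(α (-x) + y) ∈ -S := by simpa [Set.mem_neg] using hxy
    have himg : α (-(α (-x) + y)) ∈ ⇑α '' (-S) := Set.mem_image_of_mem _ hmem
    rw [h3] at himg
    simpa [neg_add_rev, map_add, map_neg, h1] using himg
  loopless := ⟨fun x hx => h2 x hx⟩

private lemma double_ne_one {k : ℕ} (hk : 1 ≤ k) (a : ZMod (2 ^ k)) : a + a ≠ 1 := by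
  intro h
  have hdvd : (2 : ℕ) ∣ 2 ^ k := dvd_pow_self 2 (by omega)
  have h2 := congrArg (ZMod.castHom hdvd (ZMod 2)) h
  rw [map_add, map_one] at h2
  revert h2
  generalize (ZMod.castHom hdvd (ZMod 2)) a = b
  revert b
  decide

private lemma nine_h1 (m n : ℕ) :
    ∀ x : ZMod (2 ^ m) × ZMod (2 ^ n),
      (AddEquiv.neg (ZMod (2 ^ m) × ZMod (2 ^ n)))
        ((AddEquiv.neg (ZMod (2 ^ m) × ZMod (2 ^ n))) x) = x := by
  intro x; simp

private lemma nine_h2 (m n : ℕ) (hm : 1 ≤ m) (hn : 2 ≤ n) :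
    ∀ x : ZMod (2 ^ m) × ZMod (2 ^ n),
      (AddEquiv.neg (ZMod (2 ^ m) × ZMod (2 ^ n))) (-x) + x ∉
        ({(1, 0), (0, 1), (1, 1)} : Set (ZMod (2 ^ m) × ZMod (2 ^ n))) := by
  intro x hx
  have hx' : x + x ∈ ({(1, 0), (0, 1), (1, 1)} : Set (ZMod (2 ^ m) × ZMod (2 ^ n))) := by
    simpa using hx
  simp only [Set.mem_insert_iff, Set.mem_singleton_iff] at hx'
  rcases hx' with h | h | h
  · exact double_ne_one hm x.1 (congrArg Prod.fst h)
  · exact double_ne_one (by omega) x.2 (congrArg Prod.snd h)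
  · exact double_ne_one hm x.1 (congrArg Prod.fst h)

private lemma nine_h3 (m n : ℕ) :
    ⇑(AddEquiv.neg (ZMod (2 ^ m) × ZMod (2 ^ n))) ''
        (-({(1, 0), (0, 1), (1, 1)} : Set (ZMod (2 ^ m) × ZMod (2 ^ n)))) =
      ({(1, 0), (0, 1), (1, 1)} : Set (ZMod (2 ^ m) × ZMod (2 ^ n))) := by
  ext x
  simp only [Set.mem_image, Set.mem_neg, Set.mem_insert_iff, Set.mem_singleton_iff,
    AddEquiv.coe_toEquiv, AddEquiv.neg_apply]
  constructor
  · rintro ⟨y, hy, rfl⟩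
    rcases hy with h | h | h <;> simp_all
  · intro hx
    exact ⟨-x, by simpa using hx, by simp⟩

/-!
In `GC(G, S, ι)` two vertices are adjacent iff their sum lies in `S`. The number of common
neighbours of the ends of an edge is an isomorphism invariant. The edge from `0` to `(1, 0)` has
the common neighbour `(0, 1)`, and also `(1, 1)` when `m = 1`. Reducing modulo `(4, 4)`, resp.
`(2, 4)`, shows that an edge at `1 = (1, 1)` has no common neighbour when `m ≥ 2`, and at most
one when `m = 1`.
-/

theorem SimpleGraph.Iso.commonNeighbors_eq_image {V W : Type*} {G : SimpleGraph V}
    {H : SimpleGraph W} (e : G ≃g H) (v w : V) :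
    H.commonNeighbors (e v) (e w) = e '' G.commonNeighbors v w := by
  ext u
  obtain ⟨u, rfl⟩ := e.surjective u
  simp [SimpleGraph.mem_commonNeighbors, e.injective.mem_set_image, e.map_adj_iff]

theorem SimpleGraph.Iso.encard_commonNeighbors {V W : Type*} {G : SimpleGraph V}
    {H : SimpleGraph W} (e : G ≃g H) (v w : V) :
    (H.commonNeighbors (e v) (e w)).encard = (G.commonNeighbors v w).encard := by
  rw [e.commonNeighbors_eq_image, e.injective.encard_image]

theorem GCadd_neg_adj_iff {G : Type*} [AddCommGroup G] (S : Set G)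
    (h1 : ∀ x : G, AddEquiv.neg G (AddEquiv.neg G x) = x)
    (h2 : ∀ x : G, AddEquiv.neg G (-x) + x ∉ S) (h3 : ⇑(AddEquiv.neg G) '' (-S) = S) (x y : G) :
    (GCadd (AddEquiv.neg G) S h1 h2 h3).Adj x y ↔ x + y ∈ S := by
  change -(-x) + y ∈ S ↔ _
  rw [neg_neg]

abbrev unitPairs (R S : Type*) [Zero R] [One R] [Zero S] [One S] : Set (R × S) :=
  {(1, 0), (0, 1), (1, 1)}

section UnitPairs

variable {A B A' B' : Type*} [NonAssocSemiring A] [NonAssocSemiring B] [NonAssocSemiring A']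
  [NonAssocSemiring B']

theorem prodMap_mem_unitPairs (f : A →+* A') (g : B →+* B') {x : A × B}
    (hx : x ∈ unitPairs A B) : f.prodMap g x ∈ unitPairs A' B' := by
  rcases hx with rfl | rfl | rfl <;> simp

theorem injOn_prodMap_unitPairs [Nontrivial A'] [Nontrivial B'] (f : A →+* A') (g : B →+* B') :
    Set.InjOn (f.prodMap g) (unitPairs A B) := by
  rintro x (rfl | rfl | rfl) y (rfl | rfl | rfl) h <;> simp_all

end UnitPairs

section PowTwo

variable {m n : ℕ}

theorem add_notMem_unitPairs (hm : 2 ≤ m) (hn : 2 ≤ n) {a b : ZMod (2 ^ m) × ZMod (2 ^ n)}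
    (ha : 1 + a ∈ unitPairs _ _) (hb : 1 + b ∈ unitPairs _ _) : a + b ∉ unitPairs _ _ := by
  have mod4 : ∀ a b : ZMod 4 × ZMod 4, 1 + a ∈ unitPairs _ _ → 1 + b ∈ unitPairs _ _ →
      a + b ∉ unitPairs _ _ := by decide
  let π := (ZMod.castHom (pow_dvd_pow 2 hm) (ZMod 4)).prodMap
    (ZMod.castHom (pow_dvd_pow 2 hn) (ZMod 4))
  have hπ : ∀ x y, x + y ∈ unitPairs _ _ → π x + π y ∈ unitPairs _ _ := fun x y h => by
    simpa only [map_add] using (prodMap_mem_unitPairs _ _ h : π (x + y) ∈ _)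
  have hπ1 : ∀ x, 1 + x ∈ unitPairs _ _ → 1 + π x ∈ unitPairs _ _ := fun x h => by
    simpa only [map_one] using hπ _ _ h
  exact fun hab => mod4 (π a) (π b) (hπ1 _ ha) (hπ1 _ hb) (hπ _ _ hab)

theorem eq_of_add_mem_unitPairs (hm : 1 ≤ m) (hn : 2 ≤ n) {a b c : ZMod (2 ^ m) × ZMod (2 ^ n)}
    (ha : 1 + a ∈ unitPairs _ _) (hb : 1 + b ∈ unitPairs _ _) (hab : a + b ∈ unitPairs _ _)
    (hc : 1 + c ∈ unitPairs _ _) (hac : a + c ∈ unitPairs _ _) : b = c := by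
  have mod24 : ∀ a b c : ZMod 2 × ZMod 4, 1 + a ∈ unitPairs _ _ → 1 + b ∈ unitPairs _ _ →
      a + b ∈ unitPairs _ _ → 1 + c ∈ unitPairs _ _ → a + c ∈ unitPairs _ _ → b = c := by
    decide
  let π := (ZMod.castHom (pow_dvd_pow 2 hm) (ZMod 2)).prodMap
    (ZMod.castHom (pow_dvd_pow 2 hn) (ZMod 4))
  have hπ : ∀ x y, x + y ∈ unitPairs _ _ → π x + π y ∈ unitPairs _ _ := fun x y h => by
    simpa only [map_add] using (prodMap_mem_unitPairs _ _ h : π (x + y) ∈ _)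
  have hπ1 : ∀ x, 1 + x ∈ unitPairs _ _ → 1 + π x ∈ unitPairs _ _ := fun x h => by
    simpa only [map_one] using hπ _ _ h
  have hπbc : π b = π c := mod24 _ _ _ (hπ1 _ ha) (hπ1 _ hb) (hπ _ _ hab) (hπ1 _ hc) (hπ _ _ hac)
  have : Fact (1 < 4) := ⟨by norm_num⟩
  -- `b` and `c` are neighbours of `1`, and `π` is injective on the neighbourhood `unitPairs - 1`.
  have h1bc : 1 + b = 1 + c :=
    (injOn_prodMap_unitPairs _ _ : Set.InjOn π _) hb hc (by rw [map_add, map_add, hπbc])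
  exact add_left_cancel h1bc

variable {X : SimpleGraph (ZMod (2 ^ m) × ZMod (2 ^ n))}

theorem adj_zero_one_zero (hX : ∀ x y, X.Adj x y ↔ x + y ∈ unitPairs _ _) : X.Adj 0 (1, 0) := by
  simp [hX]

theorem commonNeighbors_zero_one_zero_nonempty (hX : ∀ x y, X.Adj x y ↔ x + y ∈ unitPairs _ _) :
    (X.commonNeighbors 0 (1, 0)).Nonempty :=
  ⟨(0, 1), by simp [SimpleGraph.mem_commonNeighbors, hX]⟩

theorem commonNeighbors_zero_one_zero_nontrivial (hm : m = 1)
    (hX : ∀ x y, X.Adj x y ↔ x + y ∈ unitPairs _ _) :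
    (X.commonNeighbors 0 (1, 0)).Nontrivial := by
  subst hm
  have h11 : (1 : ZMod (2 ^ 1)) + 1 = 0 := by decide
  refine ⟨(0, 1), ?_, (1, 1), ?_, by simp⟩ <;>
    simp [SimpleGraph.mem_commonNeighbors, hX, h11]

theorem commonNeighbors_one_eq_empty (hm : 2 ≤ m) (hn : 2 ≤ n)
    (hX : ∀ x y, X.Adj x y ↔ x + y ∈ unitPairs _ _) {w : ZMod (2 ^ m) × ZMod (2 ^ n)}
    (hw : X.Adj 1 w) : X.commonNeighbors 1 w = ∅ := by
  ext u
  simp only [SimpleGraph.mem_commonNeighbors, hX, Set.mem_empty_iff_false, iff_false, not_and]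
  rw [hX] at hw
  exact fun hu => add_notMem_unitPairs hm hn hw hu

theorem commonNeighbors_one_subsingleton (hm : 1 ≤ m) (hn : 2 ≤ n)
    (hX : ∀ x y, X.Adj x y ↔ x + y ∈ unitPairs _ _) {w : ZMod (2 ^ m) × ZMod (2 ^ n)}
    (hw : X.Adj 1 w) : (X.commonNeighbors 1 w).Subsingleton := by
  intro u hu v hv
  rw [SimpleGraph.mem_commonNeighbors, hX, hX] at hu hv
  rw [hX] at hw
  exact eq_of_add_mem_unitPairs hm hn hw hu.1 hu.2 hv.1 hv.2

end PowTwo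

/-- For `m ≥ 1`, `n ≥ 2`, `G = ℤ/2ᵐℤ × ℤ/2ⁿℤ`, `S = {(1,0),(0,1),(1,1)}`
and `ι` the negation automorphism, the generalized Cayley graph `GC(G, S, ι)` is not
vertex-transitive. -/
theorem stmt_9 (m n : ℕ) (hm : 1 ≤ m) (hn : 2 ≤ n) :
    ¬ ∀ u v : ZMod (2 ^ m) × ZMod (2 ^ n),
        ∃ e : GCadd (AddEquiv.neg (ZMod (2 ^ m) × ZMod (2 ^ n)))
              {(1, 0), (0, 1), (1, 1)} (nine_h1 m n) (nine_h2 m n hm hn) (nine_h3 m n) ≃g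
            GCadd (AddEquiv.neg (ZMod (2 ^ m) × ZMod (2 ^ n)))
              {(1, 0), (0, 1), (1, 1)} (nine_h1 m n) (nine_h2 m n hm hn) (nine_h3 m n),
          e u = v := by
  intro h
  set X := GCadd (AddEquiv.neg (ZMod (2 ^ m) × ZMod (2 ^ n))) (unitPairs _ _) (nine_h1 m n)
    (nine_h2 m n hm hn) (nine_h3 m n)
  have hX : ∀ x y, X.Adj x y ↔ x + y ∈ unitPairs _ _ := GCadd_neg_adj_iff _ _ _ _
  obtain ⟨k, hk0, hk1⟩ : ∃ k : ℕ∞, k < (X.commonNeighbors 0 (1, 0)).encard ∧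
      ∀ w, X.Adj 1 w → (X.commonNeighbors 1 w).encard ≤ k := by
    rcases hm.eq_or_lt with rfl | hm2
    · refine ⟨1, Set.one_lt_encard_iff_nontrivial.2 ?_, fun w hw => ?_⟩
      · exact commonNeighbors_zero_one_zero_nontrivial rfl hX
      · exact Set.encard_le_one_iff_subsingleton.2 (commonNeighbors_one_subsingleton hm hn hX hw)
    · refine ⟨0, Set.encard_pos.2 (commonNeighbors_zero_one_zero_nonempty hX), fun w hw => ?_⟩
      rw [commonNeighbors_one_eq_empty hm2 hn hX hw, Set.encard_empty]
  obtain ⟨e, he⟩ := h 0 1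
  have hk := hk1 (e (1, 0)) (he ▸ e.map_adj_iff.2 (adj_zero_one_zero hX))
  rw [← he, e.encard_commonNeighbors] at hk
  exact (hk0.trans_le hk).false
end

section
/- Let X = GC(G, S, α) be a generalized Cayley graph and let K = {g ∈ G : α(g)·S = S}. Then two vertices x, y ∈ G have exactly the same set of neighbours in X (i.e., for every z ∈ G, z is adjacent to x if and only if z is adjacent to y) if and only if x⁻¹·y ∈ K. -/
/-! The neighbourhood of `x` in `GC(G, S, α)` is the left translate `α(x)·S`, so two vertices
have the same neighbours iff `α(x)·S = α(y)·S`, i.e. iff `α(x⁻¹y)·S = S`. -/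

open scoped Pointwise in
lemma smul_set_eq_smul_set_iff {G : Type*} [Group G] (a b : G) (S : Set G) :
    a • S = b • S ↔ (a⁻¹ * b) • S = S := by
  rw [mul_smul, inv_smul_eq_iff, eq_comm]

open scoped Pointwise in
lemma GC_neighborSet {G : Type*} [Group G] (α : G ≃* G) (S : Set G)
    (h1 : ∀ x : G, α (α x) = x) (h2 : ∀ x : G, α x⁻¹ * x ∉ S) (h3 : ⇑α '' S⁻¹ = S) (x : G) :
    (GC α S h1 h2 h3).neighborSet x = α x • S := by
  ext z
  rw [Set.mem_smul_set_iff_inv_smul_mem, ← map_inv]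
  rfl

/-- In a generalized Cayley graph `X = GC(G, S, α)`, two vertices `x, y`
have exactly the same set of neighbours if and only if `x⁻¹·y` lies in
`K = {g ∈ G : α(g)·S = S}`. -/
theorem stmt_16 {G : Type*} [Group G] (α : G ≃* G) (S : Set G)
    (h1 : ∀ x : G, α (α x) = x)
    (h2 : ∀ x : G, α x⁻¹ * x ∉ S)
    (h3 : ⇑α '' S⁻¹ = S)
    (x y : G) :
    (∀ z : G, (GC α S h1 h2 h3).Adj x z ↔ (GC α S h1 h2 h3).Adj y z) ↔
      x⁻¹ * y ∈ {g : G | (fun s => α g * s) '' S = S} := by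
  -- `Pointwise` is opened only here: around the statement it would elaborate `S⁻¹` differently.
  open scoped Pointwise in
  change _ ↔ α (x⁻¹ * y) • S = S
  rw [map_mul, map_inv, ← smul_set_eq_smul_set_iff, ← GC_neighborSet α S h1 h2 h3,
    ← GC_neighborSet α S h1 h2 h3, Set.ext_iff]
  rfl
end

section
/- Let X = GC(G, S, α) be a generalized Cayley graph and let K = {g ∈ G : α(g)·S = S}. Then X is unworthy (i.e., there exist two distinct vertices of X with exactly the same set of neighbours) if and only if K ≠ {1}. -/
section GeneralizedCayley

open Pointwise

variable {G : Type*} [Group G] (α : G ≃* G) (S : Set G)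
  (h1 : ∀ x : G, α (α x) = x) (h2 : ∀ x : G, α x⁻¹ * x ∉ S) (h3 : ⇑α '' S⁻¹ = S)

theorem GC_adj_iff_mem_smul (x z : G) : (GC α S h1 h2 h3).Adj x z ↔ z ∈ α x • S := by
  rw [Set.mem_smul_set_iff_inv_smul_mem, smul_eq_mul, ← map_inv]
  rfl

theorem GC_adj_iff_adj_iff_smul_eq (x y : G) :
    (∀ z, (GC α S h1 h2 h3).Adj x z ↔ (GC α S h1 h2 h3).Adj y z) ↔ α (y⁻¹ * x) • S = S := by
  simp only [GC_adj_iff_mem_smul, ← Set.ext_iff]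
  rw [map_mul, map_inv, mul_smul, inv_smul_eq_iff]

end GeneralizedCayley

/-- A generalized Cayley graph `X = GC(G, S, α)` is unworthy (has two
distinct vertices with the same neighbourhood) if and only if
`K = {g ∈ G : α(g)·S = S}` is nontrivial. -/
theorem stmt_17 {G : Type*} [Group G] (α : G ≃* G) (S : Set G)
    (h1 : ∀ x : G, α (α x) = x)
    (h2 : ∀ x : G, α x⁻¹ * x ∉ S)
    (h3 : ⇑α '' S⁻¹ = S) :
    (∃ x y : G, x ≠ y ∧
        ∀ z : G, (GC α S h1 h2 h3).Adj x z ↔ (GC α S h1 h2 h3).Adj y z) ↔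
      {g : G | (fun s => α g * s) '' S = S} ≠ {1} := by
  have one_mem : (1 : G) ∈ {g : G | (fun s => α g * s) '' S = S} := by
    simp only [Set.mem_ofPred_eq, map_one, one_mul, Set.image_id']
  rw [← Set.nontrivial_iff_ne_singleton one_mem]
  constructor
  · rintro ⟨x, y, hxy, hN⟩
    refine ⟨y⁻¹ * x, (GC_adj_iff_adj_iff_smul_eq α S h1 h2 h3 x y).1 hN, 1, one_mem, ?_⟩
    rwa [Ne, inv_mul_eq_one, eq_comm]
  · intro hK
    obtain ⟨g, hg, hg1⟩ := hK.exists_ne 1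
    refine ⟨g, 1, hg1, (GC_adj_iff_adj_iff_smul_eq α S h1 h2 h3 g 1).2 ?_⟩
    rwa [inv_one, one_mul]
end
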